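/- Environment structural manipulation preserves bisimilarity: if Γ ⊨ (M ▹ P) ≲^n (N ▹ Q) and Γ ≺ Γ', then Γ' ⊨ (M ▹ P) ≲^n (N ▹ Q). -/
import Mathlib


/-! # πcr : a π-calculus with explicit resource management (costed semantics) -/

abbrev Chan := ℕ
abbrev Var := ℕ

inductive Ident : Type
  | ch (c : Chan)
  | var (x : Var)
deriving DecidableEq

/-- Type attributes: unrestricted ω, affine 1, unique-after-i •ᵢ. -/
inductive Attr : Type
  | unr
  | aff
  | unq (i : ℕ)
deriving DecidableEq

/-- Types: channel types [T⃗]^a, recursive types μX.C (de Bruijn), type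
variables, and the process type. -/
inductive Ty : Type
  | chan (args : List Ty) (a : Attr)
  | mu (body : Ty)
  | tvar (n : ℕ)
  | proc

mutual
  /-- Substitute `R` for the de Bruijn type variable `n`. -/
  def Ty.substT (n : ℕ) (R : Ty) : Ty → Ty
    | .chan ts a => .chan (Ty.substTList n R ts) a
    | .mu T => .mu (Ty.substT (n + 1) R T)
    | .tvar m => if m = n then R else .tvar m
    | .proc => .proc
  def Ty.substTList (n : ℕ) (R : Ty) : List Ty → List Ty
    | [] => []
    | t :: ts => Ty.substT n R t :: Ty.substTList n R ts
end

/-- Equi-recursive type equivalence: least type-congruence satisfying eRec. -/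
inductive TyEquiv : Ty → Ty → Prop
  | refl (T) : TyEquiv T T
  | symm : TyEquiv T T' → TyEquiv T' T
  | trans : TyEquiv T T' → TyEquiv T' T'' → TyEquiv T T''
  | unfold (T) : TyEquiv (.mu T) (Ty.substT 0 (.mu T) T)
  | chanCong (ts₁ ts₂ : List Ty) (a : Attr) :
      TyEquiv T T' → TyEquiv (.chan (ts₁ ++ T :: ts₂) a) (.chan (ts₁ ++ T' :: ts₂) a)
  | muCong : TyEquiv T T' → TyEquiv (.mu T) (.mu T')

/-- Subtyping on attributes: •ᵢ <: •ᵢ₊₁, •ᵢ <: ω, ω <: 1. -/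
inductive AttrSub : Attr → Attr → Prop
  | indx (i) : AttrSub (.unq i) (.unq (i + 1))
  | unqUnr (i) : AttrSub (.unq i) .unr
  | unrAff : AttrSub .unr .aff

/-- Subtyping on channel types (same object types). -/
inductive TySub : Ty → Ty → Prop
  | chan (ts) : AttrSub a a' → TySub (.chan ts a) (.chan ts a')

/-- Type splitting T = T₁ ∘ T₂. -/
inductive TySplit : Ty → Ty → Ty → Prop
  | unr (ts) : TySplit (.chan ts .unr) (.chan ts .unr) (.chan ts .unr)
  | proc : TySplit .proc .proc .proc
  | unq (ts i) : TySplit (.chan ts (.unq i)) (.chan ts .aff) (.chan ts (.unq (i + 1)))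

/-- Type environments: multisets of assumptions. -/
abbrev TyEnv := Multiset (Ident × Ty)

def TyEnv.domChans (Γ : TyEnv) : Set Chan := {c | ∃ T, (Ident.ch c, T) ∈ Γ}

def TyEnv.IsPartialMap (Γ : TyEnv) : Prop := (Γ.map Prod.fst).Nodup

/-- The environment structural relation Γ ≺ Γ'. -/
inductive EnvStruct : TyEnv → TyEnv → Prop
  | refl (Γ) : EnvStruct Γ Γ
  | trans : EnvStruct Γ Γ' → EnvStruct Γ' Γ'' → EnvStruct Γ Γ''
  | con : TySplit T T₁ T₂ → EnvStruct (Γ + {(u, T)}) (Γ + {(u, T₁), (u, T₂)})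
  | join : TySplit T T₁ T₂ → EnvStruct (Γ + {(u, T₁), (u, T₂)}) (Γ + {(u, T)})
  | weak (Γ u T) : EnvStruct (Γ + {(u, T)}) Γ
  | tyEq : TyEquiv T₁ T₂ → EnvStruct (Γ + {(u, T₁)}) (Γ + {(u, T₂)})
  | sub : TySub T₁ T₂ → EnvStruct (Γ + {(u, T₁)}) (Γ + {(u, T₂)})
  | rev (Γ u ts₁ ts₂) :
      EnvStruct (Γ + {(u, Ty.chan ts₁ (.unq 0))}) (Γ + {(u, Ty.chan ts₂ (.unq 0))})

/-- Consistency of a type environment. -/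
def TyEnv.Consistent (Γ : TyEnv) : Prop :=
  ∃ Γ' : TyEnv, TyEnv.IsPartialMap Γ' ∧ EnvStruct Γ' Γ

/-- πcr processes. -/
inductive Proc : Type
  | output (u : Ident) (vs : List Ident) (P : Proc)
  | input (u : Ident) (xs : List Var) (P : Proc)
  | nil
  | ifeq (u v : Ident) (P Q : Proc)
  | recur (w : Var) (P : Proc)
  | pvar (w : Var)
  | par (P Q : Proc)
  | alloc (x : Var) (P : Proc)
  | free (u : Ident) (P : Proc)

def Ident.subst (σ : Var → Option Chan) : Ident → Ident
  | .ch c => .ch c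
  | .var x => match σ x with | some d => .ch d | none => .var x

def Ident.rename (σ : Chan → Chan) : Ident → Ident
  | .ch c => .ch (σ c)
  | .var x => .var x

def Ident.vars : Ident → Set Var
  | .ch _ => ∅
  | .var x => {x}

def Ident.chans : Ident → Set Chan
  | .ch c => {c}
  | .var _ => ∅

def removeVars (σ : Var → Option Chan) (xs : List Var) : Var → Option Chan :=
  fun x => if x ∈ xs then none else σ x

/-- Capture-avoiding substitution of channels for variables. -/
def Proc.subst : (Var → Option Chan) → Proc → Proc
  | σ, .output u vs P => .output (u.subst σ) (vs.map (Ident.subst σ)) (Proc.subst σ P)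
  | σ, .input u xs P => .input (u.subst σ) xs (Proc.subst (removeVars σ xs) P)
  | _, .nil => .nil
  | σ, .ifeq u v P Q => .ifeq (u.subst σ) (v.subst σ) (Proc.subst σ P) (Proc.subst σ Q)
  | σ, .recur w P => .recur w (Proc.subst (removeVars σ [w]) P)
  | _, .pvar w => .pvar w
  | σ, .par P Q => .par (Proc.subst σ P) (Proc.subst σ Q)
  | σ, .alloc x P => .alloc x (Proc.subst (removeVars σ [x]) P)
  | σ, .free u P => .free (u.subst σ) (Proc.subst σ P)

/-- The substitution {d⃗/x⃗}. -/
def substOf (xs : List Var) (ds : List Chan) : Var → Option Chan :=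
  fun x => (xs.zip ds).lookup x

/-- Substitution of a process `R` for the process variable `w`. -/
def Proc.substProc (w : Var) (R : Proc) : Proc → Proc
  | .output u vs P => .output u vs (Proc.substProc w R P)
  | .input u xs P => if w ∈ xs then .input u xs P else .input u xs (Proc.substProc w R P)
  | .nil => .nil
  | .ifeq u v P Q => .ifeq u v (Proc.substProc w R P) (Proc.substProc w R Q)
  | .recur w' P => if w' = w then .recur w' P else .recur w' (Proc.substProc w R P)
  | .pvar w' => if w' = w then R else .pvar w'
  | .par P Q => .par (Proc.substProc w R P) (Proc.substProc w R Q)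
  | .alloc x P => if x = w then .alloc x P else .alloc x (Proc.substProc w R P)
  | .free u P => .free u (Proc.substProc w R P)

/-- Renaming of channel names in a process. -/
def Proc.rename (σ : Chan → Chan) : Proc → Proc
  | .output u vs P => .output (u.rename σ) (vs.map (Ident.rename σ)) (Proc.rename σ P)
  | .input u xs P => .input (u.rename σ) xs (Proc.rename σ P)
  | .nil => .nil
  | .ifeq u v P Q => .ifeq (u.rename σ) (v.rename σ) (Proc.rename σ P) (Proc.rename σ Q)
  | .recur w P => .recur w (Proc.rename σ P)
  | .pvar w => .pvar w
  | .par P Q => .par (Proc.rename σ P) (Proc.rename σ Q)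
  | .alloc x P => .alloc x (Proc.rename σ P)
  | .free u P => .free (u.rename σ) (Proc.rename σ P)

def listVars (l : List Ident) : Set Var := {x | ∃ u ∈ l, x ∈ Ident.vars u}

def listChans (l : List Ident) : Set Chan := {c | ∃ u ∈ l, c ∈ Ident.chans u}

/-- Free variables of a process. -/
def Proc.freeVars : Proc → Set Var
  | .output u vs P => u.vars ∪ listVars vs ∪ P.freeVars
  | .input u xs P => u.vars ∪ (P.freeVars \ {x | x ∈ xs})
  | .nil => ∅
  | .ifeq u v P Q => u.vars ∪ v.vars ∪ P.freeVars ∪ Q.freeVars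
  | .recur w P => P.freeVars \ {w}
  | .pvar w => {w}
  | .par P Q => P.freeVars ∪ Q.freeVars
  | .alloc x P => P.freeVars \ {x}
  | .free u P => u.vars ∪ P.freeVars

/-- Channel names occurring in a process. -/
def Proc.chans : Proc → Set Chan
  | .output u vs P => u.chans ∪ listChans vs ∪ P.chans
  | .input u _ P => u.chans ∪ P.chans
  | .nil => ∅
  | .ifeq u v P Q => u.chans ∪ v.chans ∪ P.chans ∪ Q.chans
  | .recur _ P => P.chans
  | .pvar _ => ∅
  | .par P Q => P.chans ∪ Q.chans
  | .alloc _ P => P.chans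
  | .free u P => u.chans ∪ P.chans

def Proc.Closed (P : Proc) : Prop := P.freeVars = ∅

/-- Structural equivalence: least congruence for parallel composition with
commutativity, associativity and nil. -/
inductive StructEq : Proc → Proc → Prop
  | refl (P) : StructEq P P
  | symm : StructEq P Q → StructEq Q P
  | trans : StructEq P Q → StructEq Q R → StructEq P R
  | comm (P Q) : StructEq (.par P Q) (.par Q P)
  | assoc (P Q R) : StructEq (.par P (.par Q R)) (.par (.par P Q) R)
  | nil (P) : StructEq (.par P .nil) P
  | parCong : StructEq P P' → StructEq Q Q' → StructEq (.par P Q) (.par P' Q')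

/-- A system: a resource environment (finite set of allocated channels)
together with a process. -/
structure System : Type where
  res : Finset Chan
  proc : Proc

def System.rename (S : System) (σ : Chan → Chan) : System :=
  ⟨S.res.image σ, S.proc.rename σ⟩

def TyEnv.rename (Γ : TyEnv) (σ : Chan → Chan) : TyEnv :=
  Γ.map (fun p => (Ident.rename σ p.1, p.2))

/-- Environments consisting only of unrestricted assumptions. -/
def TyEnv.Unrestricted (Γ : TyEnv) : Prop :=
  ∀ p ∈ Γ, (∃ ts, p.2 = Ty.chan ts .unr) ∨ p.2 = Ty.proc

/-- The assumptions left from `u : [ts]^a` after one use: the `a − 1`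
operation.  Undefined (none) for unique-now. -/
def predEnv (u : Ident) (ts : List Ty) : Attr → Option TyEnv
  | .aff => some 0
  | .unr => some {(u, Ty.chan ts .unr)}
  | .unq 0 => none
  | .unq (i + 1) => some {(u, Ty.chan ts (.unq i))}

/-- The substructural typing judgement Γ ⊢ P. -/
inductive HasTy : TyEnv → Proc → Prop
  | out {Γ Δ : TyEnv} {u : Ident} {ts : List Ty} {a : Attr} {vs : List Ident} {P : Proc} :
      predEnv u ts a = some Δ → vs.length = ts.length →
      HasTy (Γ + Δ) P →
      HasTy (Γ + {(u, Ty.chan ts a)} + Multiset.ofList (vs.zip ts)) (.output u vs P)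
  | inp {Γ Δ : TyEnv} {u : Ident} {ts : List Ty} {a : Attr} {xs : List Var} {P : Proc} :
      predEnv u ts a = some Δ → xs.length = ts.length →
      HasTy (Γ + Δ + Multiset.ofList ((xs.map Ident.var).zip ts)) P →
      HasTy (Γ + {(u, Ty.chan ts a)}) (.input u xs P)
  | par : HasTy Γ₁ P → HasTy Γ₂ Q → HasTy (Γ₁ + Γ₂) (.par P Q)
  | ifeq : (∃ T, (u, T) ∈ Γ) → (∃ T, (v, T) ∈ Γ) →
      HasTy Γ P → HasTy Γ Q → HasTy Γ (.ifeq u v P Q)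
  | recur : TyEnv.Unrestricted Γ → HasTy (Γ + {(Ident.var w, Ty.proc)}) P →
      HasTy Γ (.recur w P)
  | pvar (w) : HasTy {(Ident.var w, Ty.proc)} (.pvar w)
  | free : HasTy Γ P → HasTy (Γ + {(u, Ty.chan ts (.unq 0))}) (.free u P)
  | alloc : HasTy (Γ + {(Ident.var x, Ty.chan ts (.unq 0))}) P → HasTy Γ (.alloc x P)
  | nil : HasTy 0 .nil
  | str : HasTy Γ' P → EnvStruct Γ Γ' → HasTy Γ P

/-- Configurations Γ ◃ M ▹ P. -/
def IsConfig (Γ : TyEnv) (S : System) : Prop :=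
  S.proc.Closed ∧ TyEnv.domChans Γ ⊆ ↑S.res ∧
  ∃ Δ : TyEnv, TyEnv.Consistent (Γ + Δ) ∧ HasTy Δ S.proc ∧ TyEnv.domChans Δ ⊆ ↑S.res

/-- The costed reduction relation M ▹ P →ₖ N ▹ Q. -/
inductive Red : System → ℤ → System → Prop
  | com {M : Finset Chan} {c : Chan} {ds : List Chan} {xs : List Var} {P Q : Proc} :
      c ∈ M → xs.length = ds.length →
      Red ⟨M, .par (.output (.ch c) (ds.map Ident.ch) P) (.input (.ch c) xs Q)⟩ 0
          ⟨M, .par P (Q.subst (substOf xs ds))⟩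
  | ifThen {M : Finset Chan} {c : Chan} {P Q : Proc} :
      c ∈ M → Red ⟨M, .ifeq (.ch c) (.ch c) P Q⟩ 0 ⟨M, P⟩
  | ifElse {M : Finset Chan} {c d : Chan} {P Q : Proc} :
      c ∈ M → d ∈ M → c ≠ d → Red ⟨M, .ifeq (.ch c) (.ch d) P Q⟩ 0 ⟨M, Q⟩
  | unfold {M : Finset Chan} {w : Var} {P : Proc} :
      Red ⟨M, .recur w P⟩ 0 ⟨M, P.substProc w (.recur w P)⟩
  | alloc {M : Finset Chan} {c : Chan} {x : Var} {P : Proc} :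
      c ∉ M → Red ⟨M, .alloc x P⟩ 1 ⟨insert c M, P.subst (substOf [x] [c])⟩
  | free {M : Finset Chan} {c : Chan} {P : Proc} :
      c ∈ M → Red ⟨M, .free (.ch c) P⟩ (-1) ⟨M.erase c, P⟩
  | str {M M' : Finset Chan} {P P' Q Q' : Proc} {k : ℤ} :
      StructEq P P' → Red ⟨M, P'⟩ k ⟨M', Q'⟩ → StructEq Q' Q → Red ⟨M, P⟩ k ⟨M', Q⟩
  | parL {M M' : Finset Chan} {P P' Q : Proc} {k : ℤ} :
      Red ⟨M, P⟩ k ⟨M', P'⟩ → Red ⟨M, .par P Q⟩ k ⟨M', .par P' Q⟩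
  | parR {M M' : Finset Chan} {P Q Q' : Proc} {k : ℤ} :
      Red ⟨M, Q⟩ k ⟨M', Q'⟩ → Red ⟨M, .par P Q⟩ k ⟨M', .par P Q'⟩

/-- Reflexive-transitive closure of reduction, accumulating costs. -/
inductive RedStar : System → ℤ → System → Prop
  | refl (S) : RedStar S 0 S
  | step {S S' S'' : System} {k l : ℤ} :
      RedStar S k S' → Red S' l S'' → RedStar S (k + l) S''

/-- Actions of the (pre-)LTS. -/
inductive Act : Type
  | out (c : Chan) (ds : List Chan)
  | inp (c : Chan) (ds : List Chan)
  | tau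
  | alloc
  | free (c : Chan)
  | env

/-- The pre-LTS over triples Γ ◃ M ▹ P. -/
inductive PreStep : TyEnv → System → Act → ℤ → TyEnv → System → Prop
  | lOut {Γ Δ : TyEnv} {c : Chan} {ts : List Ty} {a : Attr} {ds : List Chan}
      {P : Proc} {M : Finset Chan} :
      predEnv (.ch c) ts a = some Δ → ds.length = ts.length →
      PreStep (Γ + {(Ident.ch c, Ty.chan ts a)})
        ⟨M, .output (.ch c) (ds.map Ident.ch) P⟩ (.out c ds) 0
        (Γ + Δ + Multiset.ofList ((ds.map Ident.ch).zip ts)) ⟨M, P⟩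
  | lIn {Γ Δ : TyEnv} {c : Chan} {ts : List Ty} {a : Attr} {ds : List Chan}
      {xs : List Var} {P : Proc} {M : Finset Chan} :
      predEnv (.ch c) ts a = some Δ → ds.length = ts.length → xs.length = ds.length →
      PreStep (Γ + {(Ident.ch c, Ty.chan ts a)} + Multiset.ofList ((ds.map Ident.ch).zip ts))
        ⟨M, .input (.ch c) xs P⟩ (.inp c ds) 0
        (Γ + Δ) ⟨M, P.subst (substOf xs ds)⟩
  | lComL {Γ₁ Γ₁' Γ₂ Γ₂' Γ : TyEnv} {M : Finset Chan} {c : Chan} {ds : List Chan}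
      {P P' Q Q' : Proc} :
      PreStep Γ₁ ⟨M, P⟩ (.out c ds) 0 Γ₁' ⟨M, P'⟩ →
      PreStep Γ₂ ⟨M, Q⟩ (.inp c ds) 0 Γ₂' ⟨M, Q'⟩ →
      PreStep Γ ⟨M, .par P Q⟩ .tau 0 Γ ⟨M, .par P' Q'⟩
  | lComR {Γ₁ Γ₁' Γ₂ Γ₂' Γ : TyEnv} {M : Finset Chan} {c : Chan} {ds : List Chan}
      {P P' Q Q' : Proc} :
      PreStep Γ₁ ⟨M, Q⟩ (.out c ds) 0 Γ₁' ⟨M, Q'⟩ →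
      PreStep Γ₂ ⟨M, P⟩ (.inp c ds) 0 Γ₂' ⟨M, P'⟩ →
      PreStep Γ ⟨M, .par P Q⟩ .tau 0 Γ ⟨M, .par P' Q'⟩
  | lParL {Γ Γ' : TyEnv} {M M' : Finset Chan} {P P' Q : Proc} {μ : Act} {k : ℤ} :
      PreStep Γ ⟨M, P⟩ μ k Γ' ⟨M', P'⟩ →
      PreStep Γ ⟨M, .par P Q⟩ μ k Γ' ⟨M', .par P' Q⟩
  | lParR {Γ Γ' : TyEnv} {M M' : Finset Chan} {P Q Q' : Proc} {μ : Act} {k : ℤ} :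
      PreStep Γ ⟨M, Q⟩ μ k Γ' ⟨M', Q'⟩ →
      PreStep Γ ⟨M, .par P Q⟩ μ k Γ' ⟨M', .par P Q'⟩
  | lStr {Γ Γ' : TyEnv} {M : Finset Chan} {P : Proc} :
      EnvStruct Γ Γ' → PreStep Γ ⟨M, P⟩ .env 0 Γ' ⟨M, P⟩
  | lRec {Γ : TyEnv} {M : Finset Chan} {w : Var} {P : Proc} :
      PreStep Γ ⟨M, .recur w P⟩ .tau 0 Γ ⟨M, P.substProc w (.recur w P)⟩
  | lThen {Γ : TyEnv} {M : Finset Chan} {c : Chan} {P Q : Proc} :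
      c ∈ M → PreStep Γ ⟨M, .ifeq (.ch c) (.ch c) P Q⟩ .tau 0 Γ ⟨M, P⟩
  | lElse {Γ : TyEnv} {M : Finset Chan} {c d : Chan} {P Q : Proc} :
      c ∈ M → d ∈ M → c ≠ d →
      PreStep Γ ⟨M, .ifeq (.ch c) (.ch d) P Q⟩ .tau 0 Γ ⟨M, Q⟩
  | lAll {Γ : TyEnv} {M : Finset Chan} {c : Chan} {x : Var} {P : Proc} :
      c ∉ M →
      PreStep Γ ⟨M, .alloc x P⟩ .tau 1 Γ ⟨insert c M, P.subst (substOf [x] [c])⟩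
  | lAllE {Γ : TyEnv} {M : Finset Chan} {c : Chan} {ts : List Ty} {P : Proc} :
      c ∉ M →
      PreStep Γ ⟨M, P⟩ .alloc 1 (Γ + {(Ident.ch c, Ty.chan ts (.unq 0))}) ⟨insert c M, P⟩
  | lFree {Γ : TyEnv} {M : Finset Chan} {c : Chan} {P : Proc} :
      c ∉ M → PreStep Γ ⟨insert c M, .free (.ch c) P⟩ .tau (-1) Γ ⟨M, P⟩
  | lFreeE {Γ : TyEnv} {M : Finset Chan} {c : Chan} {ts : List Ty} {P : Proc} :
      c ∉ M →
      PreStep (Γ + {(Ident.ch c, Ty.chan ts (.unq 0))}) ⟨insert c M, P⟩ (.free c) (-1) Γ ⟨M, P⟩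

/-- The costed LTS: the pre-LTS closed under renamings that are invisible to
the observer (rule lRen). -/
def Step (Γ : TyEnv) (S : System) (μ : Act) (k : ℤ) (Γ' : TyEnv) (S' : System) : Prop :=
  ∃ σ : Equiv.Perm Chan, (∀ c ∈ TyEnv.domChans Γ, σ c = c) ∧
    PreStep Γ (S.rename ⇑σ) μ k Γ' S'

/-- Weak (cost-accumulating) transitions. -/
inductive Weak : TyEnv → System → Act → ℤ → TyEnv → System → Prop
  | single {Γ Γ' : TyEnv} {S S' : System} {μ : Act} {k : ℤ} :
      Step Γ S μ k Γ' S' → Weak Γ S μ k Γ' S'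
  | tauLeft {Γ Γ₁ Γ' : TyEnv} {S S₁ S' : System} {μ : Act} {l k : ℤ} :
      Step Γ S .tau l Γ₁ S₁ → Weak Γ₁ S₁ μ k Γ' S' → Weak Γ S μ (l + k) Γ' S'
  | tauRight {Γ Γ₁ Γ' : TyEnv} {S S₁ S' : System} {μ : Act} {l k : ℤ} :
      Weak Γ S μ l Γ₁ S₁ → Step Γ₁ S₁ .tau k Γ' S' → Weak Γ S μ (l + k) Γ' S'

/-- Weak μ̂ transition: for μ = τ the matching move may be empty. -/
def WeakHat (Γ : TyEnv) (S : System) (μ : Act) (k : ℤ) (Γ' : TyEnv) (S' : System) : Prop :=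
  Weak Γ S μ k Γ' S' ∨ (μ = .tau ∧ k = 0 ∧ Γ' = Γ ∧ S' = S)

/-- Amortised type-indexed relations on systems. -/
abbrev ARel := TyEnv → ℕ → System → System → Prop

/-- Both related triples must be configurations. -/
def IsAmortisedRel (R : ARel) : Prop :=
  ∀ Γ n S T, R Γ n S T → IsConfig Γ S ∧ IsConfig Γ T

/-- Amortised typed bisimulation. -/
def IsAmortisedBisim (R : ARel) : Prop :=
  IsAmortisedRel R ∧
  ∀ Γ n S T, R Γ n S T →
    (∀ μ k Γ' S', Step Γ S μ k Γ' S' →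
      ∃ (T' : System) (l : ℤ) (m : ℕ), WeakHat Γ T μ l Γ' T' ∧ (m : ℤ) = (n : ℤ) + l - k ∧ R Γ' m S' T') ∧
    (∀ μ l Γ' T', Step Γ T μ l Γ' T' →
      ∃ (S' : System) (k : ℤ) (m : ℕ), WeakHat Γ S μ k Γ' S' ∧ (m : ℤ) = (n : ℤ) + l - k ∧ R Γ' m S' T')

/-- Amortised bisimilarity at Γ with credit n : Γ ⊨ S ≲ⁿ T. -/
def Bisim (Γ : TyEnv) (n : ℕ) (S T : System) : Prop :=
  ∃ R : ARel, IsAmortisedBisim R ∧ R Γ n S T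

/-- Γ ⊨ S ≲ T : bisimilarity at some credit. -/
def BisimAny (Γ : TyEnv) (S T : System) : Prop := ∃ n, Bisim Γ n S T

/-- Bounded by m : every credit occurring in the relation is at most m. -/
def BoundedBy (R : ARel) (m : ℕ) : Prop := ∀ Γ n S T, R Γ n S T → n ≤ m

/-- Γ ⊨^m S ≲ T : related by some m-bounded amortised typed bisimulation. -/
def BoundedBisim (m : ℕ) (Γ : TyEnv) (S T : System) : Prop :=
  ∃ (R : ARel) (n : ℕ), IsAmortisedBisim R ∧ BoundedBy R m ∧ n ≤ m ∧ R Γ n S T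

/-- Barbs: (Γ ◃ M ▹ P) ⇓ c. -/
def Barb (Γ : TyEnv) (S : System) (c : Chan) : Prop :=
  (∃ (k : ℤ) (M' : Finset Chan) (R P' : Proc) (ds : List Ident) (P'' : Proc),
      RedStar S k ⟨M', R⟩ ∧ StructEq R (.par P' (.output (.ch c) ds P''))) ∧
  c ∈ TyEnv.domChans Γ

def BarbPreserving (R : ARel) : Prop :=
  ∀ Γ n S T, R Γ n S T → ∀ c, (Barb Γ S c ↔ Barb Γ T c)

def CostImproving (R : ARel) : Prop :=
  ∀ Γ n S T, R Γ n S T →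
    (∀ (k : ℤ) (S' : System), Red S k S' →
      ∃ (l : ℤ) (T' : System) (m : ℕ),
        RedStar T l T' ∧ (m : ℤ) = (n : ℤ) + l - k ∧ R Γ m S' T') ∧
    (∀ (l : ℤ) (T' : System), Red T l T' →
      ∃ (k : ℤ) (S' : System) (m : ℕ),
        RedStar S k S' ∧ (m : ℤ) = (n : ℤ) + l - k ∧ R Γ m S' T')

def FullyContextual (R : ARel) : Prop :=
  ∀ Γ n S T, R Γ n S T →
    (∀ (c : Chan) (ts : List Ty), c ∉ S.res → c ∉ T.res →
      R (Γ + {(Ident.ch c, Ty.chan ts (.unq 0))}) n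
        ⟨insert c S.res, S.proc⟩ ⟨insert c T.res, T.proc⟩) ∧
    (∀ (Γ₁ Γ₂ : TyEnv) (R₀ : Proc), EnvStruct Γ (Γ₁ + Γ₂) → HasTy Γ₂ R₀ →
      R Γ₁ n ⟨S.res, .par S.proc R₀⟩ ⟨T.res, .par T.proc R₀⟩ ∧
      R Γ₁ n ⟨S.res, .par R₀ S.proc⟩ ⟨T.res, .par R₀ T.proc⟩)

def IsContextualFamily (R : ARel) : Prop :=
  IsAmortisedRel R ∧ BarbPreserving R ∧ CostImproving R ∧ FullyContextual R

/-- The behavioural contextual preorder Γ ⊨ S ⊑ⁿ T. -/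
def CtxPre (Γ : TyEnv) (n : ℕ) (S T : System) : Prop :=
  ∃ R : ARel, IsContextualFamily R ∧ R Γ n S T

def CtxPreAny (Γ : TyEnv) (S T : System) : Prop := ∃ n, CtxPre Γ n S T

/-! ### Auxiliary lemmas -/

section Aux

open Multiset

-- rename algebra
lemma Ident.rename_id (u : Ident) : u.rename id = u := by cases u <;> rfl

lemma Ident.rename_comp (f g : Chan → Chan) (u : Ident) :
    (u.rename f).rename g = u.rename (g ∘ f) := by cases u <;> rfl

lemma Proc.rename_id (P : Proc) : P.rename id = P := by
  induction P <;> simp [Proc.rename, Ident.rename_id, *]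
  case output u vs P ih => exact List.map_id'' (fun u => Ident.rename_id u) _

lemma Proc.rename_comp (f g : Chan → Chan) (P : Proc) :
    (P.rename f).rename g = P.rename (g ∘ f) := by
  induction P <;> simp [Proc.rename, Ident.rename_comp, *]

lemma System.rename_id (S : System) : S.rename id = S := by
  cases S with
  | mk res proc => simp [System.rename, Proc.rename_id]

lemma System.rename_one (S : System) : S.rename ⇑(1 : Equiv.Perm Chan) = S := by
  rw [Equiv.Perm.coe_one, System.rename_id]

lemma System.rename_comp (f g : Chan → Chan) (S : System) :
    (S.rename f).rename g = S.rename (g ∘ f) := by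
  cases S with
  | mk res proc => simp [System.rename, Proc.rename_comp, Finset.image_image]

lemma System.rename_trans (σ π : Equiv.Perm Chan) (S : System) :
    (S.rename ⇑σ).rename ⇑π = S.rename ⇑(σ.trans π) := by
  rw [System.rename_comp, Equiv.coe_trans]

lemma System.rename_inv_cancel (σ : Equiv.Perm Chan) (S : System) :
    (S.rename ⇑σ).rename ⇑σ⁻¹ = S := by
  rw [System.rename_comp]
  have : ⇑σ⁻¹ ∘ ⇑σ = id := by
    funext c; simp
  rw [this, System.rename_id]

-- fixing lemmas
def Fixes (σ : Equiv.Perm Chan) (D : Set Chan) : Prop := ∀ c ∈ D, σ c = c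

lemma fixes_one (D : Set Chan) : Fixes 1 D := fun _ _ => rfl

lemma fixes_inv {σ : Equiv.Perm Chan} {D : Set Chan} (h : Fixes σ D) : Fixes σ⁻¹ D := by
  intro c hc
  have := h c hc
  conv_lhs => rw [← this]
  simp

lemma fixes_trans {σ π : Equiv.Perm Chan} {D : Set Chan} (h1 : Fixes σ D) (h2 : Fixes π D) :
    Fixes (σ.trans π) D := by
  intro c hc
  simp [Equiv.trans_apply, h1 c hc, h2 c hc]

lemma fixes_mono {σ : Equiv.Perm Chan} {D D' : Set Chan} (h : Fixes σ D) (hsub : D' ⊆ D) :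
    Fixes σ D' := fun c hc => h c (hsub hc)


-- PreStep inversions
lemma preStep_tau {Γ : TyEnv} {S : System} {μ : Act} {k : ℤ} {Γ₂ : TyEnv} {S₂ : System}
    (h : PreStep Γ S μ k Γ₂ S₂) (hμ : μ = .tau) :
    Γ₂ = Γ ∧ ∀ Δ : TyEnv, PreStep Δ S .tau k Δ S₂ := by
  induction h with
  | lOut => exact Act.noConfusion hμ
  | lIn => exact Act.noConfusion hμ
  | lComL h1 h2 => exact ⟨rfl, fun Δ => .lComL h1 h2⟩
  | lComR h1 h2 => exact ⟨rfl, fun Δ => .lComR h1 h2⟩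
  | lParL h ih =>
      obtain ⟨rfl, ih'⟩ := ih hμ
      subst hμ
      exact ⟨rfl, fun Δ => .lParL (ih' Δ)⟩
  | lParR h ih =>
      obtain ⟨rfl, ih'⟩ := ih hμ
      subst hμ
      exact ⟨rfl, fun Δ => .lParR (ih' Δ)⟩
  | lStr => exact Act.noConfusion hμ
  | lRec => exact ⟨rfl, fun Δ => .lRec⟩
  | lThen h => exact ⟨rfl, fun Δ => .lThen h⟩
  | lElse h1 h2 h3 => exact ⟨rfl, fun Δ => .lElse h1 h2 h3⟩
  | lAll h => exact ⟨rfl, fun Δ => .lAll h⟩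
  | lAllE => exact Act.noConfusion hμ
  | lFree h => exact ⟨rfl, fun Δ => .lFree h⟩
  | lFreeE => exact Act.noConfusion hμ

lemma preStep_env {Γ : TyEnv} {S : System} {μ : Act} {k : ℤ} {Γ₂ : TyEnv} {S₂ : System}
    (h : PreStep Γ S μ k Γ₂ S₂) (hμ : μ = .env) :
    k = 0 ∧ S₂ = S ∧ EnvStruct Γ Γ₂ := by
  induction h with
  | lOut => exact Act.noConfusion hμ
  | lIn => exact Act.noConfusion hμ
  | lComL h1 h2 => exact Act.noConfusion hμ
  | lComR h1 h2 => exact Act.noConfusion hμ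
  | lParL h ih =>
      obtain ⟨rfl, hS, hes⟩ := ih hμ
      obtain ⟨hM, hP⟩ := System.mk.injEq _ _ _ _ ▸ hS
      subst hM; subst hP
      exact ⟨rfl, rfl, hes⟩
  | lParR h ih =>
      obtain ⟨rfl, hS, hes⟩ := ih hμ
      obtain ⟨hM, hP⟩ := System.mk.injEq _ _ _ _ ▸ hS
      subst hM; subst hP
      exact ⟨rfl, rfl, hes⟩
  | lStr hes => exact ⟨rfl, rfl, hes⟩
  | lRec => exact Act.noConfusion hμ
  | lThen h => exact Act.noConfusion hμ
  | lElse h1 h2 h3 => exact Act.noConfusion hμ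
  | lAll h => exact Act.noConfusion hμ
  | lAllE => exact Act.noConfusion hμ
  | lFree h => exact Act.noConfusion hμ
  | lFreeE => exact Act.noConfusion hμ

-- Step lemmas
lemma step_tau {Γ : TyEnv} {V : System} {k : ℤ} {Γ₂ : TyEnv} {S₂ : System}
    (h : Step Γ V .tau k Γ₂ S₂) :
    Γ₂ = Γ ∧ ∀ Δ : TyEnv, TyEnv.domChans Δ ⊆ TyEnv.domChans Γ → Step Δ V .tau k Δ S₂ := by
  obtain ⟨π, hπ, hps⟩ := h
  obtain ⟨rfl, h'⟩ := preStep_tau hps rfl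
  exact ⟨rfl, fun Δ hsub => ⟨π, fun c hc => hπ c (hsub hc), h' Δ⟩⟩

lemma step_env {Δ : TyEnv} {V : System} {l : ℤ} {Γ' : TyEnv} {T₁ : System}
    (h : Step Δ V .env l Γ' T₁) :
    l = 0 ∧ EnvStruct Δ Γ' ∧
      ∃ π : Equiv.Perm Chan, Fixes π (TyEnv.domChans Δ) ∧ T₁ = V.rename ⇑π := by
  obtain ⟨π, hπ, hps⟩ := h
  obtain ⟨rfl, hS, hes⟩ := preStep_env hps rfl
  exact ⟨rfl, hes, π, hπ, hS⟩

lemma step_env_of_envstruct {Δ Γ' : TyEnv} {V : System} (h : EnvStruct Δ Γ') :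
    Step Δ V .env 0 Γ' V := by
  refine ⟨1, fixes_one _, ?_⟩
  rw [System.rename_one]
  obtain ⟨M, P⟩ := V
  exact PreStep.lStr h

lemma step_rename_src {Γ : TyEnv} {S : System} {μ : Act} {k : ℤ} {Γ₂ : TyEnv} {S₂ : System}
    (σ : Equiv.Perm Chan) (hfix : Fixes σ (TyEnv.domChans Γ)) :
    Step Γ (S.rename ⇑σ) μ k Γ₂ S₂ ↔ Step Γ S μ k Γ₂ S₂ := by
  constructor
  · rintro ⟨π, hπ, hps⟩
    refine ⟨σ.trans π, fixes_trans hfix hπ, ?_⟩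
    rwa [System.rename_trans] at hps
  · rintro ⟨π, hπ, hps⟩
    refine ⟨σ⁻¹.trans π, fixes_trans (fixes_inv hfix) hπ, ?_⟩
    rw [System.rename_trans]
    have hT : σ.trans (σ⁻¹.trans π) = π := by ext c; simp
    rwa [hT]

lemma weak_cast {Γ : TyEnv} {S : System} {μ : Act} {k k' : ℤ} {Γ' : TyEnv} {S' : System}
    (h : Weak Γ S μ k Γ' S') (hk : k = k') : Weak Γ S μ k' Γ' S' := by subst hk; exact h

lemma weak_rename_src {Γ : TyEnv} {S : System} {μ : Act} {k : ℤ} {Γ₂ : TyEnv} {S₂ : System}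
    (h : Weak Γ S μ k Γ₂ S₂) (σ : Equiv.Perm Chan) (hfix : Fixes σ (TyEnv.domChans Γ)) :
    Weak Γ (S.rename ⇑σ) μ k Γ₂ S₂ := by
  induction h with
  | single hs => exact .single ((step_rename_src σ hfix).mpr hs)
  | tauLeft hs hw ih => exact .tauLeft ((step_rename_src σ hfix).mpr hs) hw
  | tauRight hw hs ih => exact .tauRight (ih hfix) hs

lemma weak_unrename_src {Γ : TyEnv} {S : System} {μ : Act} {k : ℤ} {Γ₂ : TyEnv} {S₂ : System}
    (σ : Equiv.Perm Chan) (hfix : Fixes σ (TyEnv.domChans Γ))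
    (h : Weak Γ (S.rename ⇑σ) μ k Γ₂ S₂) : Weak Γ S μ k Γ₂ S₂ := by
  have := weak_rename_src h σ⁻¹ (fixes_inv hfix)
  rwa [System.rename_inv_cancel] at this

lemma weak_comp {Γ : TyEnv} {A : System} {p : ℤ} {Γ₂ : TyEnv} {B : System}
    {μ : Act} {q : ℤ} {Γ₃ : TyEnv} {C : System}
    {ν : Act} (h1 : Weak Γ A ν p Γ₂ B) (hν : ν = .tau) (h2 : Weak Γ₂ B μ q Γ₃ C) :
    Weak Γ A μ (p + q) Γ₃ C := by
  induction h1 generalizing q Γ₃ C with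
  | single hs => subst hν; exact .tauLeft hs h2
  | tauLeft hs hw ih => exact weak_cast (.tauLeft hs (ih hν h2)) (by ring)
  | tauRight hw hs ih => exact weak_cast (ih hν (.tauLeft hs h2)) (by ring)


lemma weak_env_decomp {Δ : TyEnv} {V : System} {ν : Act} {l : ℤ} {Γ' : TyEnv} {T₁ : System}
    (h : Weak Δ V ν l Γ' T₁) (hν : ν = .env)
    (hdom : TyEnv.domChans Γ' ⊆ TyEnv.domChans Δ) :
    ∃ ρ : Equiv.Perm Chan, Fixes ρ (TyEnv.domChans Γ') ∧
      ((T₁ = V.rename ⇑ρ ∧ l = 0) ∨ ∃ W, Weak Γ' V .tau l Γ' W ∧ T₁ = W.rename ⇑ρ) := by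
  revert hdom
  induction h with
  | single hs =>
      intro hdom
      subst hν
      obtain ⟨rfl, hes, π, hπ, rfl⟩ := step_env hs
      exact ⟨π, fixes_mono hπ hdom, .inl ⟨rfl, rfl⟩⟩
  | tauLeft hs hw ih =>
      intro hdom
      obtain ⟨rfl, htrans⟩ := step_tau hs
      have hs' := htrans _ hdom
      obtain ⟨ρ, hρ, hcase⟩ := ih hν hdom
      rcases hcase with ⟨hT, rfl⟩ | ⟨W, hw', hT⟩
      · exact ⟨ρ, hρ, .inr ⟨_, weak_cast (.single hs') (by ring), hT⟩⟩
      · exact ⟨ρ, hρ, .inr ⟨W, .tauLeft hs' hw', hT⟩⟩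
  | tauRight hw hs ih =>
      intro hdom
      obtain ⟨rfl, -⟩ := step_tau hs
      obtain ⟨ρ, hρ, hcase⟩ := ih hν hdom
      rcases hcase with ⟨rfl, rfl⟩ | ⟨W, hw', rfl⟩
      · have hs' := (step_rename_src ρ hρ).mp hs
        exact ⟨1, fixes_one _, .inr ⟨_, weak_cast (.single hs') (by ring),
          (System.rename_one _).symm⟩⟩
      · have hs' := (step_rename_src ρ hρ).mp hs
        exact ⟨1, fixes_one _, .inr ⟨_, .tauRight hw' hs', (System.rename_one _).symm⟩⟩

lemma weak_env_absorb {Δ : TyEnv} {V : System} {l : ℤ} {Γ' : TyEnv} {T₁ : System}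
    {μ : Act} {l' : ℤ} {Γ'' : TyEnv} {T'' : System}
    (hd : Weak Δ V .env l Γ' T₁)
    (hdom : TyEnv.domChans Γ' ⊆ TyEnv.domChans Δ)
    (hw : WeakHat Γ' T₁ μ l' Γ'' T'') :
    Weak Γ' V μ (l + l') Γ'' T'' ∨
      (μ = .tau ∧ Γ'' = Γ' ∧ ∃ (ρ : Equiv.Perm Chan) (W : System),
        Fixes ρ (TyEnv.domChans Γ') ∧ T'' = W.rename ⇑ρ ∧
          WeakHat Γ' V .tau (l + l') Γ' W) := by
  obtain ⟨ρ, hρ, hcase⟩ := weak_env_decomp hd rfl hdom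
  rcases hcase with ⟨rfl, rfl⟩ | ⟨W₀, hτ, rfl⟩
  · rcases hw with hwk | ⟨hμ, rfl, rfl, rfl⟩
    · exact .inl (weak_cast (weak_unrename_src ρ hρ hwk) (by ring))
    · exact .inr ⟨hμ, rfl, ρ, V, hρ, rfl, .inr ⟨rfl, by ring, rfl, rfl⟩⟩
  · rcases hw with hwk | ⟨hμ, rfl, rfl, rfl⟩
    · exact .inl (weak_comp hτ rfl (weak_unrename_src ρ hρ hwk))
    · exact .inr ⟨hμ, rfl, ρ, W₀, hρ, rfl, .inl (weak_cast hτ (by ring))⟩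


-- TyEnv rename algebra
lemma TyEnv.rename_add (Γ Δ : TyEnv) (f : Chan → Chan) :
    (Γ + Δ).rename f = Γ.rename f + Δ.rename f := Multiset.map_add _ _ _

lemma TyEnv.rename_zero (f : Chan → Chan) : (0 : TyEnv).rename f = 0 := rfl

lemma TyEnv.rename_single (u : Ident) (T : Ty) (f : Chan → Chan) :
    ({(u, T)} : TyEnv).rename f = {(u.rename f, T)} := Multiset.map_singleton _ _

lemma TyEnv.rename_pair (u : Ident) (T₁ T₂ : Ty) (f : Chan → Chan) :
    ({(u, T₁), (u, T₂)} : TyEnv).rename f = {(u.rename f, T₁), (u.rename f, T₂)} := by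
  simp [TyEnv.rename]

lemma EnvStruct.rename {Γ Γ' : TyEnv} (h : EnvStruct Γ Γ') (f : Chan → Chan) :
    EnvStruct (Γ.rename f) (Γ'.rename f) := by
  induction h with
  | refl => exact .refl _
  | trans h1 h2 ih1 ih2 => exact .trans ih1 ih2
  | con hs =>
      rw [TyEnv.rename_add, TyEnv.rename_add, TyEnv.rename_single, TyEnv.rename_pair]
      exact .con hs
  | join hs =>
      rw [TyEnv.rename_add, TyEnv.rename_add, TyEnv.rename_single, TyEnv.rename_pair]
      exact .join hs
  | weak Γ u T =>
      rw [TyEnv.rename_add, TyEnv.rename_single]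
      exact .weak _ _ _
  | tyEq he =>
      rw [TyEnv.rename_add, TyEnv.rename_add, TyEnv.rename_single, TyEnv.rename_single]
      exact .tyEq he
  | sub hs =>
      rw [TyEnv.rename_add, TyEnv.rename_add, TyEnv.rename_single, TyEnv.rename_single]
      exact .sub hs
  | rev Γ u ts₁ ts₂ =>
      rw [TyEnv.rename_add, TyEnv.rename_add, TyEnv.rename_single, TyEnv.rename_single]
      exact .rev _ _ _ _

-- predEnv commutes with rename
lemma predEnv_rename {u : Ident} {ts : List Ty} {a : Attr} {Δ : TyEnv}
    (h : predEnv u ts a = some Δ) (f : Chan → Chan) :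
    predEnv (u.rename f) ts a = some (Δ.rename f) := by
  cases a with
  | unr =>
      simp [predEnv] at h ⊢
      rw [← h, TyEnv.rename_single]
  | aff =>
      simp [predEnv] at h ⊢
      rw [← h, TyEnv.rename_zero]
  | unq i =>
      cases i with
      | zero => simp [predEnv] at h
      | succ j =>
          simp [predEnv] at h ⊢
          rw [← h, TyEnv.rename_single]

lemma zip_rename (vs : List Ident) (ts : List Ty) (f : Chan → Chan) :
    TyEnv.rename (Multiset.ofList (vs.zip ts)) f
      = Multiset.ofList ((vs.map (Ident.rename f)).zip ts) := by
  rw [TyEnv.rename]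
  rw [Multiset.map_coe]
  congr 1
  induction vs generalizing ts with
  | nil => simp
  | cons v vs ih =>
      cases ts with
      | nil => simp
      | cons t ts => simp [ih]

lemma TyEnv.rename_unrestricted {Γ : TyEnv} (h : TyEnv.Unrestricted Γ) (f : Chan → Chan) :
    TyEnv.Unrestricted (Γ.rename f) := by
  intro p hp
  rw [TyEnv.rename, Multiset.mem_map] at hp
  obtain ⟨q, hq, rfl⟩ := hp
  exact h q hq

lemma HasTy.rename {Γ : TyEnv} {P : Proc} (h : HasTy Γ P) (f : Chan → Chan) :
    HasTy (Γ.rename f) (P.rename f) := by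
  induction h with
  | @out Γ Δ u ts a vs P hpred hlen hP ih =>
      rw [TyEnv.rename_add, TyEnv.rename_add, TyEnv.rename_single, zip_rename]
      show HasTy _ (Proc.rename f (.output u vs P))
      simp only [Proc.rename]
      refine HasTy.out (predEnv_rename hpred f) (by simpa using hlen) ?_
      rw [← TyEnv.rename_add]
      exact ih
  | @inp Γ Δ u ts a xs P hpred hlen hP ih =>
      rw [TyEnv.rename_add, TyEnv.rename_single]
      simp only [Proc.rename]
      refine HasTy.inp (predEnv_rename hpred f) hlen ?_
      have hxs : TyEnv.rename (Multiset.ofList ((xs.map Ident.var).zip ts)) f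
          = Multiset.ofList ((xs.map Ident.var).zip ts) := by
        rw [zip_rename, List.map_map]
        have : (Ident.rename f ∘ Ident.var) = Ident.var := by funext x; rfl
        rw [this]
      rw [TyEnv.rename_add, TyEnv.rename_add, hxs] at ih
      exact ih
  | par h1 h2 ih1 ih2 =>
      rw [TyEnv.rename_add]
      exact .par ih1 ih2
  | ifeq hu hv h1 h2 ih1 ih2 =>
      obtain ⟨T, hT⟩ := hu
      obtain ⟨T', hT'⟩ := hv
      exact .ifeq ⟨T, Multiset.mem_map_of_mem _ hT⟩ ⟨T', Multiset.mem_map_of_mem _ hT'⟩ ih1 ih2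
  | recur hunr hP ih =>
      refine .recur (TyEnv.rename_unrestricted hunr f) ?_
      rw [TyEnv.rename_add, TyEnv.rename_single] at ih
      exact ih
  | pvar w =>
      have : ({(Ident.var w, Ty.proc)} : TyEnv).rename f = {(Ident.var w, Ty.proc)} := by
        rw [TyEnv.rename_single]; rfl
      rw [this]
      exact .pvar w
  | free hP ih =>
      rw [TyEnv.rename_add, TyEnv.rename_single]
      exact .free ih
  | alloc hP ih =>
      rw [TyEnv.rename_add, TyEnv.rename_single] at ih
      exact .alloc ih
  | nil => exact .nil
  | str hP hes ih => exact .str ih (hes.rename f)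


-- domChans lemmas
lemma domChans_add (Γ Δ : TyEnv) :
    TyEnv.domChans (Γ + Δ) = TyEnv.domChans Γ ∪ TyEnv.domChans Δ := by
  ext c
  simp only [TyEnv.domChans, Set.mem_setOf_eq, Set.mem_union, Multiset.mem_add]
  constructor
  · rintro ⟨T, hT | hT⟩
    · exact .inl ⟨T, hT⟩
    · exact .inr ⟨T, hT⟩
  · rintro (⟨T, hT⟩ | ⟨T, hT⟩)
    · exact ⟨T, .inl hT⟩
    · exact ⟨T, .inr hT⟩

lemma envstruct_domChans {Γ Γ' : TyEnv} (h : EnvStruct Γ Γ') :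
    TyEnv.domChans Γ' ⊆ TyEnv.domChans Γ := by
  induction h with
  | refl => exact subset_rfl
  | trans h1 h2 ih1 ih2 => exact ih2.trans ih1
  | @con T T₁ T₂ Γ u hs =>
      rw [domChans_add, domChans_add]
      refine Set.union_subset_union_right _ ?_
      intro c hc
      obtain ⟨T', hT'⟩ := hc
      simp only [Multiset.insert_eq_cons, Multiset.mem_cons, Multiset.mem_singleton] at hT'
      rcases hT' with h' | h' <;>
        · obtain ⟨h1, h2⟩ := Prod.mk.injEq _ _ _ _ ▸ h'
          exact ⟨T, by rw [← h1]; exact Multiset.mem_singleton_self _⟩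
  | @join T T₁ T₂ Γ u hs =>
      rw [domChans_add, domChans_add]
      refine Set.union_subset_union_right _ ?_
      intro c hc
      obtain ⟨T', hT'⟩ := hc
      rw [Multiset.mem_singleton] at hT'
      obtain ⟨h1, h2⟩ := Prod.mk.injEq _ _ _ _ ▸ hT'
      exact ⟨T₁, by rw [← h1]; simp⟩
  | weak Γ u T =>
      rw [domChans_add]
      exact Set.subset_union_left
  | @tyEq T₁ T₂ Γ u he =>
      rw [domChans_add, domChans_add]
      refine Set.union_subset_union_right _ ?_
      intro c hc
      obtain ⟨T', hT'⟩ := hc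
      rw [Multiset.mem_singleton] at hT'
      obtain ⟨h1, h2⟩ := Prod.mk.injEq _ _ _ _ ▸ hT'
      exact ⟨T₁, by rw [← h1]; simp⟩
  | @sub T₁ T₂ Γ u hs =>
      rw [domChans_add, domChans_add]
      refine Set.union_subset_union_right _ ?_
      intro c hc
      obtain ⟨T', hT'⟩ := hc
      rw [Multiset.mem_singleton] at hT'
      obtain ⟨h1, h2⟩ := Prod.mk.injEq _ _ _ _ ▸ hT'
      exact ⟨T₁, by rw [← h1]; simp⟩
  | rev Γ u ts₁ ts₂ =>
      rw [domChans_add, domChans_add]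
      refine Set.union_subset_union_right _ ?_
      intro c hc
      obtain ⟨T', hT'⟩ := hc
      rw [Multiset.mem_singleton] at hT'
      obtain ⟨h1, h2⟩ := Prod.mk.injEq _ _ _ _ ▸ hT'
      exact ⟨Ty.chan ts₁ (.unq 0), by rw [← h1]; simp⟩

lemma envstruct_add_context {Γ Γ' : TyEnv} (h : EnvStruct Γ Γ') (Θ : TyEnv) :
    EnvStruct (Γ + Θ) (Γ' + Θ) := by
  induction h with
  | refl => exact .refl _
  | trans h1 h2 ih1 ih2 => exact .trans ih1 ih2
  | @con T T₁ T₂ Γ u hs =>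
      rw [add_right_comm, add_right_comm _ _ Θ]
      exact .con hs
  | @join T T₁ T₂ Γ u hs =>
      rw [add_right_comm, add_right_comm _ _ Θ]
      exact .join hs
  | weak Γ u T =>
      rw [add_right_comm]
      exact .weak _ _ _
  | tyEq he =>
      rw [add_right_comm, add_right_comm _ _ Θ]
      exact .tyEq he
  | sub hs =>
      rw [add_right_comm, add_right_comm _ _ Θ]
      exact .sub hs
  | rev Γ u ts₁ ts₂ =>
      rw [add_right_comm, add_right_comm _ _ Θ]
      exact .rev _ _ _ _

lemma isConfig_envstruct {Γ Γ' : TyEnv} {S : System} (hes : EnvStruct Γ Γ')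
    (h : IsConfig Γ S) : IsConfig Γ' S := by
  obtain ⟨hcl, hdom, Δ, hcons, hty, hdomΔ⟩ := h
  refine ⟨hcl, (envstruct_domChans hes).trans hdom, Δ, ?_, hty, hdomΔ⟩
  obtain ⟨Γ₀, hpm, hes₀⟩ := hcons
  exact ⟨Γ₀, hpm, hes₀.trans (envstruct_add_context hes Δ)⟩


lemma Ident.vars_rename (f : Chan → Chan) (u : Ident) : (u.rename f).vars = u.vars := by
  cases u <;> rfl

lemma listVars_rename (f : Chan → Chan) (vs : List Ident) :
    listVars (vs.map (Ident.rename f)) = listVars vs := by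
  ext x
  simp only [listVars, Set.mem_setOf_eq, List.mem_map]
  constructor
  · rintro ⟨u, ⟨v, hv, rfl⟩, hx⟩
    exact ⟨v, hv, by rwa [Ident.vars_rename] at hx⟩
  · rintro ⟨v, hv, hx⟩
    exact ⟨v.rename f, ⟨v, hv, rfl⟩, by rwa [Ident.vars_rename]⟩

lemma Proc.freeVars_rename (f : Chan → Chan) (P : Proc) :
    (P.rename f).freeVars = P.freeVars := by
  induction P <;> simp [Proc.rename, Proc.freeVars, Ident.vars_rename, listVars_rename, *]

lemma TyEnv.rename_fixed {Γ : TyEnv} {f : Chan → Chan}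
    (h : ∀ c ∈ TyEnv.domChans Γ, f c = c) : Γ.rename f = Γ := by
  rw [TyEnv.rename]
  rw [show Γ = Multiset.map id Γ from (Multiset.map_id Γ).symm]
  conv_lhs => rw [Multiset.map_id Γ]
  apply Multiset.map_congr rfl
  rintro ⟨i, T⟩ hp
  cases i with
  | var x => rfl
  | ch c =>
      have : c ∈ TyEnv.domChans Γ := ⟨T, hp⟩
      simp [Ident.rename, h c this]

lemma Ident.rename_injective {f : Chan → Chan} (hf : Function.Injective f) :
    Function.Injective (Ident.rename f) := by
  intro u v huv
  cases u <;> cases v <;> simp_all [Ident.rename]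
  exact hf huv

lemma isConfig_rename_rev {Γ : TyEnv} {S : System} (σ : Equiv.Perm Chan)
    (hfix : Fixes σ (TyEnv.domChans Γ)) (h : IsConfig Γ (S.rename ⇑σ)) : IsConfig Γ S := by
  obtain ⟨M, P⟩ := S
  obtain ⟨hcl, hdom, Δ, hcons, hty, hdomΔ⟩ := h
  have hfix' : ∀ c ∈ TyEnv.domChans Γ, (⇑σ⁻¹) c = c := fixes_inv hfix
  refine ⟨?_, ?_, Δ.rename ⇑σ⁻¹, ?_, ?_, ?_⟩
  · unfold Proc.Closed at hcl ⊢
    rwa [System.rename, Proc.freeVars_rename] at hcl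
  · intro c hc
    have := hdom hc
    rw [System.rename] at this
    simp only [Finset.coe_image, Set.mem_image, Finset.mem_coe] at this
    obtain ⟨r, hr, hrc⟩ := this
    have hrceq : r = c := σ.injective (by rw [hrc, hfix c hc])
    subst hrceq
    simpa using hr
  · obtain ⟨Γ₀, hpm, hes₀⟩ := hcons
    refine ⟨Γ₀.rename ⇑σ⁻¹, ?_, ?_⟩
    · unfold TyEnv.IsPartialMap at hpm ⊢
      rw [TyEnv.rename]
      rw [Multiset.map_map]
      have : (Prod.fst ∘ fun p : Ident × Ty => (Ident.rename (⇑σ⁻¹) p.1, p.2))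
          = (Ident.rename ⇑σ⁻¹) ∘ Prod.fst := rfl
      rw [this, ← Multiset.map_map]
      exact hpm.map (Ident.rename_injective σ⁻¹.injective)
    · have := hes₀.rename ⇑σ⁻¹
      rwa [TyEnv.rename_add, TyEnv.rename_fixed hfix'] at this
  · have := hty.rename ⇑σ⁻¹
    rwa [show (System.rename ⟨M, P⟩ ⇑σ).proc = P.rename ⇑σ from rfl,
      Proc.rename_comp, show (⇑σ⁻¹ ∘ ⇑σ) = id by funext c; simp, Proc.rename_id] at this
  · intro c hc
    obtain ⟨T, hT⟩ := hc
    rw [TyEnv.rename, Multiset.mem_map] at hT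
    obtain ⟨⟨i, T'⟩, hmem, heq⟩ := hT
    obtain ⟨h1, h2⟩ := Prod.mk.injEq _ _ _ _ ▸ heq
    cases i with
    | var x => exact absurd h1 (by simp [Ident.rename])
    | ch d =>
        have hd : (⇑σ⁻¹) d = c := by
          simpa [Ident.rename] using h1
        have : d ∈ TyEnv.domChans Δ := ⟨T', hmem⟩
        have := hdomΔ this
        rw [show (System.rename ⟨M, P⟩ ⇑σ).res = M.image ⇑σ from rfl] at this
        simp only [Finset.coe_image, Set.mem_image, Finset.mem_coe] at this
        obtain ⟨r, hr, hrd⟩ := this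
        have : r = c := by
          apply σ.injective
          rw [hrd, ← hd]
          simp
        rwa [← this]


-- Bisimilarity helpers
lemma bisim_isConfig {Γ : TyEnv} {n : ℕ} {S T : System} (h : Bisim Γ n S T) :
    IsConfig Γ S ∧ IsConfig Γ T := by
  obtain ⟨R, ⟨hrel, _⟩, hmem⟩ := h
  exact hrel _ _ _ _ hmem

lemma bisim_left {Γ : TyEnv} {n : ℕ} {S T : System} (h : Bisim Γ n S T)
    {μ : Act} {k : ℤ} {Γ' : TyEnv} {S' : System} (hs : Step Γ S μ k Γ' S') :
    ∃ (T' : System) (l : ℤ) (m : ℕ), WeakHat Γ T μ l Γ' T' ∧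
      (m : ℤ) = (n : ℤ) + l - k ∧ Bisim Γ' m S' T' := by
  obtain ⟨R, hR, hmem⟩ := h
  obtain ⟨T', l, m, hwh, hm, hmem'⟩ := ((hR.2 _ _ _ _ hmem).1 _ _ _ _ hs)
  exact ⟨T', l, m, hwh, hm, R, hR, hmem'⟩

lemma bisim_right {Γ : TyEnv} {n : ℕ} {S T : System} (h : Bisim Γ n S T)
    {μ : Act} {l : ℤ} {Γ' : TyEnv} {T' : System} (hs : Step Γ T μ l Γ' T') :
    ∃ (S' : System) (k : ℤ) (m : ℕ), WeakHat Γ S μ k Γ' S' ∧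
      (m : ℤ) = (n : ℤ) + l - k ∧ Bisim Γ' m S' T' := by
  obtain ⟨R, hR, hmem⟩ := h
  obtain ⟨S', k, m, hwh, hm, hmem'⟩ := ((hR.2 _ _ _ _ hmem).2 _ _ _ _ hs)
  exact ⟨S', k, m, hwh, hm, R, hR, hmem'⟩

/-- The candidate relation: bisimilarity at some structurally smaller
environment, up to renamings invisible to the observer. -/
def BisimEnvRel : ARel := fun Γ₁ n S T =>
  IsConfig Γ₁ S ∧ IsConfig Γ₁ T ∧
    ∃ (Δ : TyEnv) (σ ρ : Equiv.Perm Chan), EnvStruct Δ Γ₁ ∧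
      Fixes σ (TyEnv.domChans Γ₁) ∧ Fixes ρ (TyEnv.domChans Γ₁) ∧
      Bisim Δ n (S.rename ⇑σ) (T.rename ⇑ρ)

lemma bisimEnvRel_left {Γ₁ : TyEnv} {n : ℕ} {S T : System}
    (hR : BisimEnvRel Γ₁ n S T) {μ : Act} {k : ℤ} {Γ'' : TyEnv} {S' : System}
    (hstep : Step Γ₁ S μ k Γ'' S') :
    ∃ (T' : System) (l : ℤ) (m : ℕ), WeakHat Γ₁ T μ l Γ'' T' ∧
      (m : ℤ) = (n : ℤ) + l - k ∧ BisimEnvRel Γ'' m S' T' := by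
  obtain ⟨hcS, hcT, Δ, σ, ρ, hes, hfσ, hfρ, hb⟩ := hR
  have hdom := envstruct_domChans hes
  -- challenge 1 : environment move
  obtain ⟨T₁, l₁, m₀, hwh₁, hm₀, hb₁⟩ := bisim_left hb (step_env_of_envstruct hes (V := S.rename ⇑σ))
  have hw₁ : Weak Δ (T.rename ⇑ρ) .env l₁ Γ₁ T₁ := by
    rcases hwh₁ with h | ⟨h, -⟩
    · exact h
    · exact Act.noConfusion h
  -- challenge 2 : the given move
  obtain ⟨T'', l', m', hwh₂, hm', hb₂⟩ :=
    bisim_left hb₁ ((step_rename_src σ hfσ).mpr hstep)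
  rcases weak_env_absorb hw₁ hdom hwh₂ with hleft | ⟨hμτ, hΓeq, ρ', W, hfρ', hT'', hwh3⟩
  · refine ⟨T'', l₁ + l', m', .inl (weak_unrename_src ρ hfρ hleft), by omega, ?_⟩
    obtain ⟨hc1, hc2⟩ := bisim_isConfig hb₂
    exact ⟨hc1, hc2, Γ'', 1, 1, .refl _, fixes_one _, fixes_one _,
      by rw [System.rename_one, System.rename_one]; exact hb₂⟩
  · subst hμτ; subst hΓeq
    obtain ⟨hc1, hc2⟩ := bisim_isConfig hb₂
    rcases hwh3 with hwk3 | ⟨-, hcost0, -, hWeq⟩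
    · refine ⟨W, l₁ + l', m', .inl (weak_unrename_src ρ hfρ hwk3), by omega, ?_⟩
      refine ⟨hc1, isConfig_rename_rev ρ' hfρ' (hT'' ▸ hc2), _, 1, ρ', .refl _,
        fixes_one _, hfρ', ?_⟩
      rw [System.rename_one, ← hT'']
      exact hb₂
    · refine ⟨T, 0, m', .inr ⟨rfl, rfl, rfl, rfl⟩, by omega, ?_⟩
      refine ⟨hc1, hcT, _, 1, ρ.trans ρ', .refl _, fixes_one _,
        fixes_trans hfρ hfρ', ?_⟩
      rw [System.rename_one, ← System.rename_trans, ← hWeq, ← hT'']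
      exact hb₂

lemma bisimEnvRel_right {Γ₁ : TyEnv} {n : ℕ} {S T : System}
    (hR : BisimEnvRel Γ₁ n S T) {μ : Act} {c₀ : ℤ} {Γ'' : TyEnv} {T₂ : System}
    (hstep : Step Γ₁ T μ c₀ Γ'' T₂) :
    ∃ (S' : System) (kk : ℤ) (m : ℕ), WeakHat Γ₁ S μ kk Γ'' S' ∧
      (m : ℤ) = (n : ℤ) + c₀ - kk ∧ BisimEnvRel Γ'' m S' T₂ := by
  obtain ⟨hcS, hcT, Δ, σ, ρ, hes, hfσ, hfρ, hb⟩ := hR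
  have hdom := envstruct_domChans hes
  obtain ⟨S₁, k₁, m₀, hwh₁, hm₀, hb₁⟩ := bisim_right hb (step_env_of_envstruct hes (V := T.rename ⇑ρ))
  have hw₁ : Weak Δ (S.rename ⇑σ) .env k₁ Γ₁ S₁ := by
    rcases hwh₁ with h | ⟨h, -⟩
    · exact h
    · exact Act.noConfusion h
  obtain ⟨S₂, k₂, m', hwh₂, hm', hb₂⟩ :=
    bisim_right hb₁ ((step_rename_src ρ hfρ).mpr hstep)
  rcases weak_env_absorb hw₁ hdom hwh₂ with hleft | ⟨hμτ, hΓeq, ρ', W, hfρ', hS₂, hwh3⟩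
  · refine ⟨S₂, k₁ + k₂, m', .inl (weak_unrename_src σ hfσ hleft), by omega, ?_⟩
    obtain ⟨hc1, hc2⟩ := bisim_isConfig hb₂
    exact ⟨hc1, hc2, Γ'', 1, 1, .refl _, fixes_one _, fixes_one _,
      by rw [System.rename_one, System.rename_one]; exact hb₂⟩
  · subst hμτ; subst hΓeq
    obtain ⟨hc1, hc2⟩ := bisim_isConfig hb₂
    rcases hwh3 with hwk3 | ⟨-, hcost0, -, hWeq⟩
    · refine ⟨W, k₁ + k₂, m', .inl (weak_unrename_src σ hfσ hwk3), by omega, ?_⟩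
      refine ⟨isConfig_rename_rev ρ' hfρ' (hS₂ ▸ hc1), hc2, _, ρ', 1, .refl _,
        hfρ', fixes_one _, ?_⟩
      rw [System.rename_one, ← hS₂]
      exact hb₂
    · refine ⟨S, 0, m', .inr ⟨rfl, rfl, rfl, rfl⟩, by omega, ?_⟩
      refine ⟨hcS, hc2, _, σ.trans ρ', 1, .refl _, fixes_trans hfσ hfρ',
        fixes_one _, ?_⟩
      rw [System.rename_one, ← System.rename_trans, ← hWeq, ← hS₂]
      exact hb₂

lemma bisimEnvRel_isBisim : IsAmortisedBisim BisimEnvRel := by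
  constructor
  · intro Γ n S T h
    exact ⟨h.1, h.2.1⟩
  · intro Γ n S T h
    constructor
    · intro μ k Γ' S' hs
      exact bisimEnvRel_left h hs
    · intro μ l Γ' T' hs
      exact bisimEnvRel_right h hs

end Aux

/-- Environment structural manipulation preserves bisimilarity. -/
theorem envstruct_preserves_bisim (Γ Γ' : TyEnv) (n : ℕ) (S T : System)
    (h : Bisim Γ n S T) (hstr : EnvStruct Γ Γ') :
    Bisim Γ' n S T := by
  obtain ⟨hcS, hcT⟩ := bisim_isConfig h
  refine ⟨BisimEnvRel, bisimEnvRel_isBisim, ?_⟩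
  exact ⟨isConfig_envstruct hstr hcS, isConfig_envstruct hstr hcT, Γ, 1, 1, hstr,
    fixes_one _, fixes_one _, by rw [System.rename_one, System.rename_one]; exact h⟩
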